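/- arXiv:2506.03919 — 2 statements merged into one kernel-verified Lean document; each statement's English description precedes it below -/
import Mathlib

section
/- Let W' be an m×n real matrix and δ a nonzero vector in ℝⁿ with exactly k nonzero components. Suppose each entry of W' equals w_{rj}·z_{rj} where the w_{rj} are independent random variables with continuous (atomless) distributions and the z_{rj} are independent Bernoulli variables equal to 0 with probability ρ and 1 with probability 1−ρ, all mutually independent. Then the probability that W'δ = 0 equals ρ^{k·m}. -/
open MeasureTheory ProbabilityTheory

/-- If `X` is atomless and independent of `Y`, any event whose `x`-slices are
subsingletons has probability zero. -/
lemma aux_null {Ω β : Type*} [MeasurableSpace Ω] [MeasurableSpace β]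
    (μ : Measure Ω) [IsProbabilityMeasure μ]
    (X : Ω → ℝ) (Y : Ω → β) (hX : Measurable X) (hY : Measurable Y)
    (hXY : IndepFun Y X μ)
    (hatom : ∀ c : ℝ, μ {ω | X ω = c} = 0)
    (B : Set (β × ℝ)) (hB : MeasurableSet B)
    (hslice : ∀ b : β, Set.Subsingleton {x : ℝ | (b, x) ∈ B}) :
    μ {ω | (Y ω, X ω) ∈ B} = 0 := by
  have hmX : IsProbabilityMeasure (μ.map X) :=
    Measure.isProbabilityMeasure_map hX.aemeasurable
  have hmap : μ.map (fun ω => (Y ω, X ω)) = (μ.map Y).prod (μ.map X) :=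
    (indepFun_iff_map_prod_eq_prod_map_map hY.aemeasurable hX.aemeasurable).mp hXY
  have h1 : μ {ω | (Y ω, X ω) ∈ B} = μ.map (fun ω => (Y ω, X ω)) B := by
    rw [Measure.map_apply (hY.prodMk hX) hB]; rfl
  rw [h1, hmap, Measure.prod_apply hB]
  have hz : ∀ b, (μ.map X) (Prod.mk b ⁻¹' B) = 0 := by
    intro b
    rcases (hslice b).eq_empty_or_singleton with h | ⟨c, h⟩
    · have he : Prod.mk b ⁻¹' B = ∅ := h
      simp [he]
    · have he : Prod.mk b ⁻¹' B = {c} := h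
      rw [he, Measure.map_apply hX (measurableSet_singleton c)]
      simpa [Set.preimage, Set.mem_singleton_iff] using hatom c
  simp only [hz, lintegral_zero]

/-- For a random matrix `W'` with entries `w r j * z r j` (continuous
atomless `w`, Bernoulli(1-ρ) masks `z`, all mutually independent) and a fixed nonzero
vector `δ` with exactly `k` nonzero components, the probability that `W' δ = 0`
equals `ρ ^ (k * m)`. -/
theorem stmt0
    {Ω : Type*} [MeasurableSpace Ω] (μ : Measure Ω) [IsProbabilityMeasure μ]
    (m n k : ℕ) (ρ : ℝ) (hρ : ρ ∈ Set.Ioo (0 : ℝ) 1)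
    (δ : Fin n → ℝ) (hδ : δ ≠ 0)
    (hk : (Finset.univ.filter fun j => δ j ≠ 0).card = k)
    (w z : Fin m → Fin n → Ω → ℝ)
    (hwm : ∀ r j, Measurable (w r j)) (hzm : ∀ r j, Measurable (z r j))
    (hatomless : ∀ r j (c : ℝ), μ {ω | w r j ω = c} = 0)
    (hz01 : ∀ r j ω, z r j ω = 0 ∨ z r j ω = 1)
    (hbern : ∀ r j, μ {ω | z r j ω = 0} = ENNReal.ofReal ρ)
    (hind : iIndepFun
      (fun p : Fin m × Fin n × Bool =>
        if p.2.2 then w p.1 p.2.1 else z p.1 p.2.1) μ) :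
    μ {ω | ∀ r : Fin m, ∑ j, w r j ω * z r j ω * δ j = 0}
      = ENNReal.ofReal ρ ^ (k * m) := by
  classical
  set ι := Fin m × Fin n × Bool
  set f : ι → Ω → ℝ := fun p => if p.2.2 then w p.1 p.2.1 else z p.1 p.2.1 with hf_def
  have hfw : ∀ r j, f (r, j, true) = w r j := fun r j => rfl
  have hfz : ∀ r j, f (r, j, false) = z r j := fun r j => rfl
  have hfm : ∀ i : ι, Measurable (f i) := by
    rintro ⟨r, j, (_ | _)⟩
    · exact hzm r j
    · exact hwm r j
  -- The event
  set E : Set Ω := {ω | ∀ r : Fin m, ∑ j, w r j ω * z r j ω * δ j = 0} with hE_def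
  -- The "all relevant masks are zero" event
  set A : Set Ω := {ω | ∀ r j, δ j ≠ 0 → z r j ω = 0} with hA_def
  -- For each (r, j0) with δ j0 ≠ 0, the event that z r j0 = 1 and row sum r is 0 is null
  have hnull : ∀ (r : Fin m) (j0 : Fin n), δ j0 ≠ 0 →
      μ {ω | z r j0 ω = 1 ∧ ∑ j, w r j ω * z r j ω * δ j = 0} = 0 := by
    intro r j0 hj0
    set i0 : ι := (r, j0, true) with hi0_def
    set T : Finset ι := Finset.univ.erase i0 with hT_def
    have hdisj : Disjoint ({i0} : Finset ι) T := by
      simp [hT_def, Finset.disjoint_left]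
    have hindep := hind.indepFun_finset {i0} T hdisj hfm
    -- X := w r j0, Y := the tuple of all other variables (filled with 0 at i0)
    set X : Ω → ℝ := w r j0 with hX_def
    set Y : Ω → (ι → ℝ) := fun ω i => if h : i ∈ T then f i ω else 0 with hY_def
    have hYm : Measurable Y := by
      refine measurable_pi_lambda _ fun i => ?_
      by_cases h : i ∈ T
      · have he : (fun c => Y c i) = f i := by funext ω; simp [hY_def, h]
        rw [he]; exact hfm i
      · have he : (fun c => Y c i) = fun _ => (0:ℝ) := by funext ω; simp [hY_def, h]
        rw [he]; exact measurable_const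
    have hXY : IndepFun Y X μ := by
      have hφ : Measurable (fun t : (T → ℝ) => (fun i : ι => if h : i ∈ T then t ⟨i, h⟩ else 0)) := by
        apply measurable_pi_lambda
        intro i
        by_cases h : i ∈ T
        · simpa [h] using measurable_pi_apply (⟨i, h⟩ : T)
        · simp only [dif_neg h]; exact measurable_const
      have hev : Measurable (fun t : (({i0} : Finset ι) → ℝ) =>
          t ⟨i0, Finset.mem_singleton_self i0⟩) := measurable_pi_apply _
      have := (hindep.symm.comp hφ hev :
        IndepFun ((fun t : (T → ℝ) => (fun i : ι => if h : i ∈ T then t ⟨i, h⟩ else 0)) ∘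
            (fun a (i : T) => f i a))
          ((fun t : (({i0} : Finset ι) → ℝ) => t ⟨i0, Finset.mem_singleton_self i0⟩) ∘
            (fun a (i : ({i0} : Finset ι)) => f i a)) μ)
      exact this
    -- the bad set in the product space
    set B : Set ((ι → ℝ) × ℝ) :=
      {p | p.1 (r, j0, false) = 1 ∧
        p.2 * δ j0 + ∑ j ∈ Finset.univ.erase j0, p.1 (r, j, true) * p.1 (r, j, false) * δ j = 0}
      with hB_def
    have hmeasG : Measurable fun p : (ι → ℝ) × ℝ =>
        p.2 * δ j0 + ∑ j ∈ Finset.univ.erase j0, p.1 (r, j, true) * p.1 (r, j, false) * δ j := by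
      have h2 : Measurable fun p : (ι → ℝ) × ℝ => p.2 * δ j0 :=
        measurable_snd.mul measurable_const
      have h3 : Measurable fun p : (ι → ℝ) × ℝ =>
          ∑ j ∈ Finset.univ.erase j0, p.1 (r, j, true) * p.1 (r, j, false) * δ j := by
        apply Finset.measurable_sum
        intro j _
        have e1 : Measurable fun p : (ι → ℝ) × ℝ => p.1 (r, j, true) :=
          measurable_fst.eval
        have e2 : Measurable fun p : (ι → ℝ) × ℝ => p.1 (r, j, false) :=
          measurable_fst.eval
        exact (e1.mul e2).mul measurable_const
      exact h2.add h3
    have hBm : MeasurableSet B :=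
      (measurableSet_eq_fun measurable_fst.eval measurable_const).inter
        (measurableSet_eq_fun hmeasG measurable_const)
    have hslice : ∀ t : ι → ℝ, Set.Subsingleton {x : ℝ | (t, x) ∈ B} := by
      intro t x hx y hy
      have hx2 := hx.2
      have hy2 := hy.2
      have : x * δ j0 = y * δ j0 := by linarith
      exact mul_right_cancel₀ hj0 this
    have key := aux_null μ X Y (hwm r j0) hYm hXY (hatomless r j0) B hBm hslice
    -- identify the event with the preimage
    have hset : {ω | z r j0 ω = 1 ∧ ∑ j, w r j ω * z r j ω * δ j = 0}
        = {ω | (Y ω, X ω) ∈ B} := by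
      ext ω
      have hYe : ∀ i : ι, i ≠ i0 → Y ω i = f i ω := by
        intro i hi
        simp only [hY_def]
        rw [dif_pos (Finset.mem_erase.mpr ⟨hi, Finset.mem_univ _⟩)]
      have hz0 : Y ω (r, j0, false) = z r j0 ω := by
        rw [hYe (r, j0, false) (fun h => by simpa using congrArg (fun p : ι => p.2.2) h), hfz]
      have hsum : ∀ j ∈ Finset.univ.erase j0,
          Y ω (r, j, true) * Y ω (r, j, false) * δ j = w r j ω * z r j ω * δ j := by
        intro j hj
        have hjne : j ≠ j0 := (Finset.mem_erase.mp hj).1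
        rw [hYe (r, j, true) (fun h => hjne (congrArg (fun p : ι => p.2.1) h)), hYe (r, j, false) (fun h => by simpa using congrArg (fun p : ι => p.2.2) h),
          hfw, hfz]
      have hBmem : (Y ω, X ω) ∈ B ↔
          (Y ω (r, j0, false) = 1 ∧
            X ω * δ j0 + ∑ j ∈ Finset.univ.erase j0,
              Y ω (r, j, true) * Y ω (r, j, false) * δ j = 0) := Iff.rfl
      simp only [Set.mem_setOf_eq, hBmem, hz0, Finset.sum_congr rfl hsum]
      constructor
      · rintro ⟨h1, h2⟩
        refine ⟨h1, ?_⟩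
        have hX : X ω * δ j0 = w r j0 ω * z r j0 ω * δ j0 := by rw [h1, mul_one]
        rw [hX, Finset.add_sum_erase Finset.univ
          (fun j => w r j ω * z r j ω * δ j) (Finset.mem_univ j0)]
        exact h2
      · rintro ⟨h1, h2⟩
        refine ⟨h1, ?_⟩
        have hX : X ω * δ j0 = w r j0 ω * z r j0 ω * δ j0 := by rw [h1, mul_one]
        rw [hX, Finset.add_sum_erase Finset.univ
          (fun j => w r j ω * z r j ω * δ j) (Finset.mem_univ j0)] at h2
        exact h2
    rw [hset]
    exact key
  -- A ⊆ E
  have hAE : A ⊆ E := by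
    intro ω hω r
    apply Finset.sum_eq_zero
    intro j _
    by_cases hj : δ j = 0
    · rw [hj, mul_zero]
    · rw [hω r j hj, mul_zero, zero_mul]
  -- the null complement
  set N : Set Ω := ⋃ p : Fin m × Fin n,
    {ω | δ p.2 ≠ 0 ∧ z p.1 p.2 ω = 1 ∧ ∑ j, w p.1 j ω * z p.1 j ω * δ j = 0} with hN_def
  have hNnull : μ N = 0 := by
    apply measure_iUnion_null
    rintro ⟨r, j0⟩
    by_cases hj : δ j0 = 0
    · convert measure_empty (μ := μ)
      ext ω; simp [hj]
    · refine measure_mono_null ?_ (hnull r j0 hj)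
      intro ω hω
      exact ⟨hω.2.1, hω.2.2⟩
  have hEAN : E ⊆ A ∪ N := by
    intro ω hω
    by_cases hA' : ∀ r j, δ j ≠ 0 → z r j ω = 0
    · exact Or.inl hA'
    · right
      push_neg at hA'
      obtain ⟨r, j, hj, hzne⟩ := hA'
      have hz1 : z r j ω = 1 := (hz01 r j ω).resolve_left hzne
      exact Set.mem_iUnion.mpr ⟨(r, j), hj, hz1, hω r⟩
  -- μ E = μ A
  have hEA : μ E = μ A := by
    apply le_antisymm
    · calc μ E ≤ μ (A ∪ N) := measure_mono hEAN
        _ ≤ μ A + μ N := measure_union_le _ _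
        _ = μ A := by rw [hNnull, add_zero]
    · exact measure_mono hAE
  rw [hEA]
  -- compute μ A via independence
  set S' : Finset ι := (Finset.univ.filter fun p : Fin m × Fin n => δ p.2 ≠ 0).image
    (fun p => (p.1, p.2, false)) with hS'_def
  have hAeq : A = ⋂ i ∈ S', f i ⁻¹' {0} := by
    ext ω
    simp only [hA_def, Set.mem_setOf_eq, Set.mem_iInter, hS'_def, Finset.mem_image,
      Finset.mem_filter, Finset.mem_univ, true_and]
    constructor
    · rintro h i ⟨⟨r, j⟩, hj, rfl⟩
      simpa [hfz] using h r j hj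
    · intro h r j hj
      simpa [hfz] using h (r, j, false) ⟨(r, j), hj, rfl⟩
  have hprod : μ (⋂ i ∈ S', f i ⁻¹' {0}) = ∏ i ∈ S', μ (f i ⁻¹' {0}) := by
    apply hind.meas_biInter
    intro i _
    exact ⟨{0}, measurableSet_singleton 0, rfl⟩
  have hconst : ∀ i ∈ S', μ (f i ⁻¹' {0}) = ENNReal.ofReal ρ := by
    intro i hi
    obtain ⟨⟨r, j⟩, _, rfl⟩ := Finset.mem_image.mp hi
    simpa [hfz, Set.preimage, Set.mem_singleton_iff] using hbern r j
  have hcard : S'.card = k * m := by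
    rw [hS'_def, Finset.card_image_of_injective _ (by
      intro p q hpq
      have h1 : p.1 = q.1 := congrArg (fun x : ι => x.1) hpq
      have h2 : p.2 = q.2 := congrArg (fun x : ι => x.2.1) hpq
      exact Prod.ext h1 h2)]
    have : (Finset.univ.filter fun p : Fin m × Fin n => δ p.2 ≠ 0)
        = Finset.univ ×ˢ (Finset.univ.filter fun j => δ j ≠ 0) := by
      ext p
      simp [Finset.mem_product]
    rw [this, Finset.card_product, Finset.card_univ, Fintype.card_fin, hk, mul_comm]
  rw [hAeq, hprod, Finset.prod_congr rfl hconst, Finset.prod_const, hcard]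
end

section
/- Let X be a finite set of N vectors in ℝⁿ, and let k ≥ 1 be the minimum number of nonzero components of x_u − x_v over all distinct pairs x_u, x_v ∈ X. Let W' be an m×n random matrix whose entries are products of independent continuous random variables with independent Bernoulli(1−ρ) masks. If σ : ℝ → ℝ is injective applied elementwise, then the map f(x) = σ(W'x) is injective on X with probability at least 1 − C(N,2)·ρ^{k·m}, where C(N,2) = N(N−1)/2. -/
open MeasureTheory ProbabilityTheory


lemma zero_prob_eq {Ω β : Type*} [MeasurableSpace Ω] [MeasurableSpace β]
    (μ : Measure Ω) [IsProbabilityMeasure μ]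
    (X : Ω → ℝ) (Y : Ω → β) (hX : Measurable X) (hY : Measurable Y)
    (hind : IndepFun X Y μ) (hatom : ∀ c, μ {ω | X ω = c} = 0)
    (g : β → ℝ) (hg : Measurable g) : μ {ω | X ω = g (Y ω)} = 0 := by
  have hmap : μ.map (fun ω => (Y ω, X ω)) = (μ.map Y).prod (μ.map X) :=
    (indepFun_iff_map_prod_eq_prod_map_map hY.aemeasurable hX.aemeasurable).mp hind.symm
  have hs : MeasurableSet {p : β × ℝ | p.2 = g p.1} :=
    measurableSet_eq_fun measurable_snd (hg.comp measurable_fst)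
  have : IsProbabilityMeasure (μ.map X) := Measure.isProbabilityMeasure_map hX.aemeasurable
  have h1 : μ {ω | X ω = g (Y ω)}
      = ((μ.map Y).prod (μ.map X)) {p : β × ℝ | p.2 = g p.1} := by
    rw [← hmap, Measure.map_apply (hY.prodMk hX) hs]
    rfl
  rw [h1, Measure.prod_apply hs]
  have h2 : ∀ y : β, (μ.map X) (Prod.mk y ⁻¹' {p : β × ℝ | p.2 = g p.1}) = 0 := by
    intro y
    have he : (Prod.mk y ⁻¹' {p : β × ℝ | p.2 = g p.1}) = {x : ℝ | x = g y} := rfl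
    rw [he, Measure.map_apply hX (by exact measurableSet_eq)]
    exact hatom (g y)
  rw [lintegral_congr h2]
  simp

set_option maxHeartbeats 1000000 in
lemma row_zero
    {Ω : Type*} [MeasurableSpace Ω] (μ : Measure Ω) [IsProbabilityMeasure μ]
    {m n : ℕ}
    (w z : Fin m → Fin n → Ω → ℝ)
    (hwm : ∀ r j, Measurable (w r j)) (hzm : ∀ r j, Measurable (z r j))
    (hatomless : ∀ r j (c : ℝ), μ {ω | w r j ω = c} = 0)
    (hind : iIndepFun
      (fun p : Fin m × Fin n × Bool =>
        if p.2.2 then w p.1 p.2.1 else z p.1 p.2.1) μ)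
    (δ : Fin n → ℝ) (r : Fin m) (j0 : Fin n) (hδ : δ j0 ≠ 0) :
    μ {ω | z r j0 ω = 1 ∧ ∑ j, w r j ω * z r j ω * δ j = 0} = 0 := by
  classical
  set F : Fin m × Fin n × Bool → Ω → ℝ :=
    fun p => if p.2.2 then w p.1 p.2.1 else z p.1 p.2.1 with hF
  have hFm : ∀ p, Measurable (F p) := by
    rintro ⟨a, b, (_|_)⟩ <;> simp [hF] <;> [exact hzm a b; exact hwm a b]
  set i0 : Fin m × Fin n × Bool := (r, j0, true) with hi0
  set T : Finset (Fin m × Fin n × Bool) := Finset.univ.erase i0 with hT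
  have hdisj : Disjoint ({i0} : Finset _) T := by
    simp [hT, Finset.disjoint_left]
  have hIF := hind.indepFun_finset {i0} T hdisj hFm
  -- compose
  set φ : (({i0} : Finset _) → ℝ) → ℝ := fun v => v ⟨i0, Finset.mem_singleton_self i0⟩ with hφ
  set ψ : ({x // x ∈ T} → ℝ) → (Fin m × Fin n × Bool → ℝ) :=
    fun v i => if h : i ∈ T then v ⟨i, h⟩ else 0 with hψ
  have hφm : Measurable φ := measurable_pi_apply _
  have hψm : Measurable ψ := by
    apply measurable_pi_lambda
    intro i
    by_cases h : i ∈ T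
    · simp only [hψ, dif_pos h]; exact measurable_pi_apply _
    · simp only [hψ, dif_neg h]; exact measurable_const
  have hF0 : F i0 = w r j0 := by simp [hF, hi0]
  have hIXY : IndepFun (fun ω => F i0 ω)
      (fun ω (i : Fin m × Fin n × Bool) => if h : i ∈ T then F i ω else 0) μ :=
    hIF.comp hφm hψm
  set g : (Fin m × Fin n × Bool → ℝ) → ℝ :=
    fun v => -(∑ j ∈ Finset.univ.erase j0, v (r, j, true) * v (r, j, false) * δ j) / δ j0
    with hg
  have hgm : Measurable g := by
    apply Measurable.div_const
    apply Measurable.neg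
    exact Finset.measurable_sum _ (fun j _ =>
      ((measurable_pi_apply (r, j, true)).mul (measurable_pi_apply (r, j, false))).mul
        measurable_const)
  have hsub : {ω | z r j0 ω = 1 ∧ ∑ j, w r j ω * z r j ω * δ j = 0}
      ⊆ {ω | F i0 ω = g (fun i => if h : i ∈ T then F i ω else 0)} := by
    intro ω ⟨hz1, hsum⟩
    simp only [Set.mem_setOf_eq, hg]
    have hval : ∀ j ∈ Finset.univ.erase j0,
        (if h : (r, j, true) ∈ T then F (r, j, true) ω else 0)
          * (if h : (r, j, false) ∈ T then F (r, j, false) ω else 0) * δ j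
        = w r j ω * z r j ω * δ j := by
      intro j hj
      have hjne : j ≠ j0 := Finset.ne_of_mem_erase hj
      have h1 : (r, j, true) ∈ T := by
        simp [hT, hi0, Finset.mem_erase, Prod.ext_iff, hjne]
      have h2 : (r, j, false) ∈ T := by
        simp [hT, hi0, Finset.mem_erase, Prod.ext_iff]
      rw [dif_pos h1, dif_pos h2]
      simp [hF]
    rw [Finset.sum_congr rfl hval, hF0]
    rw [← Finset.sum_erase_add _ _ (Finset.mem_univ j0), hz1, mul_one] at hsum
    rw [eq_div_iff hδ]
    linarith
  refine measure_mono_null hsub ?_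
  refine zero_prob_eq μ _ _ (hFm i0) ?_ hIXY (by rw [hF0]; exact hatomless r j0) g hgm
  apply measurable_pi_lambda
  intro i
  by_cases h : i ∈ T
  · simp only [dif_pos h]; exact hFm i
  · simp only [dif_neg h]; exact measurable_const

set_option maxHeartbeats 1000000 in
lemma pair_bound
    {Ω : Type*} [MeasurableSpace Ω] (μ : Measure Ω) [IsProbabilityMeasure μ]
    {m n k : ℕ} {ρ : ℝ} (hρ0 : 0 ≤ ρ) (hρ1 : ρ ≤ 1)
    (w z : Fin m → Fin n → Ω → ℝ)
    (hwm : ∀ r j, Measurable (w r j)) (hzm : ∀ r j, Measurable (z r j))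
    (hatomless : ∀ r j (c : ℝ), μ {ω | w r j ω = c} = 0)
    (hz01 : ∀ r j ω, z r j ω = 0 ∨ z r j ω = 1)
    (hbern : ∀ (r : Fin m) (j : Fin n), μ {ω | z r j ω = 0} = ENNReal.ofReal ρ)
    (hind : iIndepFun
      (fun p : Fin m × Fin n × Bool =>
        if p.2.2 then w p.1 p.2.1 else z p.1 p.2.1) μ)
    (δ : Fin n → ℝ)
    (hδk : k ≤ (Finset.univ.filter fun j => δ j ≠ 0).card) :
    μ {ω | ∀ r, ∑ j, w r j ω * z r j ω * δ j = 0} ≤ ENNReal.ofReal ρ ^ (k * m) := by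
  classical
  set S : Finset (Fin n) := Finset.univ.filter fun j => δ j ≠ 0 with hS
  set B : Set Ω := {ω | ∀ r, ∀ j ∈ S, z r j ω = 0} with hB
  set C : Fin m → Fin n → Set Ω :=
    fun r j => {ω | z r j ω = 1 ∧ ∑ j', w r j' ω * z r j' ω * δ j' = 0} with hC
  -- inclusion
  have hincl : {ω | ∀ r, ∑ j, w r j ω * z r j ω * δ j = 0}
      ⊆ B ∪ ⋃ r, ⋃ j ∈ S, C r j := by
    intro ω hω
    by_cases hωB : ω ∈ B
    · exact Or.inl hωB
    · right
      simp only [hB, Set.mem_setOf_eq, not_forall] at hωB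
      obtain ⟨r, j, hjS, hzne⟩ := hωB
      refine Set.mem_iUnion.2 ⟨r, Set.mem_iUnion₂.2 ⟨j, hjS, ?_⟩⟩
      refine ⟨?_, hω r⟩
      rcases hz01 r j ω with h | h
      · exact absurd h hzne
      · exact h
  have hCnull : (⋃ r, ⋃ j ∈ S, C r j : Set Ω) = ∅ ∨ True := Or.inr trivial
  have hCzero : μ (⋃ r, ⋃ j ∈ S, C r j) = 0 := by
    refine measure_iUnion_null fun r => ?_
    refine measure_biUnion_null_iff (S : Set (Fin n)).toFinite.countable |>.2 fun j hj => ?_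
    have hδj : δ j ≠ 0 := by
      have := hj
      simp only [hS, Finset.coe_filter, Set.mem_setOf_eq] at this
      exact this.2
    exact row_zero μ w z hwm hzm hatomless hind δ r j hδj
  have hmB : μ B = ENNReal.ofReal ρ ^ (m * S.card) := by
    set F : Fin m × Fin n × Bool → Ω → ℝ :=
      fun p => if p.2.2 then w p.1 p.2.1 else z p.1 p.2.1 with hF
    set Sfin : Finset (Fin m × Fin n × Bool) :=
      (Finset.univ ×ˢ S).image (fun q => (q.1, q.2, false)) with hSfin
    have hBeq : B = ⋂ i ∈ Sfin, F i ⁻¹' ({0} : Set ℝ) := by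
      ext ω
      simp only [hB, Set.mem_setOf_eq, Set.mem_iInter, hSfin, Finset.mem_image,
        Finset.mem_product, Finset.mem_univ, true_and, Prod.exists]
      constructor
      · rintro h i ⟨r, j, hjS, rfl⟩
        simp only [Set.mem_preimage, hF, Set.mem_singleton_iff]
        simpa using h r j hjS
      · intro h r j hjS
        have := h (r, j, false) ⟨r, j, hjS, rfl⟩
        simpa [hF] using this
    have hprod := hind.measure_inter_preimage_eq_mul Sfin
      (sets := fun _ => ({0} : Set ℝ)) (fun i _ => measurableSet_singleton 0)
    rw [hBeq, hprod]
    have hval : ∀ i ∈ Sfin, μ (F i ⁻¹' ({0} : Set ℝ)) = ENNReal.ofReal ρ := by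
      rintro i hi
      simp only [hSfin, Finset.mem_image, Finset.mem_product, Finset.mem_univ, true_and,
        Prod.exists] at hi
      obtain ⟨r, j, hjS, rfl⟩ := hi
      have : F (r, j, false) ⁻¹' ({0} : Set ℝ) = {ω | z r j ω = 0} := by
        ext ω; simp [hF]
      rw [this, hbern r j]
    rw [Finset.prod_congr rfl hval, Finset.prod_const]
    congr 1
    rw [hSfin, Finset.card_image_of_injective _ (by intro a b hab; simpa [Prod.ext_iff] using hab),
      Finset.card_product, Finset.card_univ, Fintype.card_fin]
  calc μ {ω | ∀ r, ∑ j, w r j ω * z r j ω * δ j = 0}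
      ≤ μ (B ∪ ⋃ r, ⋃ j ∈ S, C r j) := measure_mono hincl
    _ ≤ μ B + μ (⋃ r, ⋃ j ∈ S, C r j) := measure_union_le _ _
    _ = ENNReal.ofReal ρ ^ (m * S.card) := by rw [hCzero, hmB, add_zero]
    _ ≤ ENNReal.ofReal ρ ^ (k * m) := by
        apply pow_le_pow_of_le_one zero_le (by simpa using ENNReal.ofReal_le_one.2 hρ1)
        calc k * m ≤ S.card * m := Nat.mul_le_mul_right m hδk
          _ = m * S.card := Nat.mul_comm _ _


set_option maxHeartbeats 1000000 in
/-- For a finite set `X` of `N` vectors in ℝⁿ whose pairwise differences all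
have at least `k ≥ 1` nonzero components, and a random `m × n` matrix with entries
`w r j * z r j` (independent continuous entries, independent Bernoulli(1-ρ) pruning masks),
the map `x ↦ σ (W' x)` (with `σ` injective elementwise) is injective on `X` with
probability at least `1 - (N(N-1)/2) ρ^(k m)`. -/
theorem stmt1
    {Ω : Type*} [MeasurableSpace Ω] (μ : Measure Ω) [IsProbabilityMeasure μ]
    (m n k N : ℕ) (ρ : ℝ) (hρ : ρ ∈ Set.Ioo (0 : ℝ) 1)
    (X : Finset (Fin n → ℝ)) (hX : X.card = N)
    (hk1 : 1 ≤ k)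
    (hkmin : ∀ x ∈ X, ∀ y ∈ X, x ≠ y →
      k ≤ (Finset.univ.filter fun j => x j - y j ≠ 0).card)
    (σ : ℝ → ℝ) (hσ : Function.Injective σ)
    (w z : Fin m → Fin n → Ω → ℝ)
    (hwm : ∀ r j, Measurable (w r j)) (hzm : ∀ r j, Measurable (z r j))
    (hatomless : ∀ r j (c : ℝ), μ {ω | w r j ω = c} = 0)
    (hz01 : ∀ r j ω, z r j ω = 0 ∨ z r j ω = 1)
    (hbern : ∀ r j, μ {ω | z r j ω = 0} = ENNReal.ofReal ρ)
    (hind : iIndepFun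
      (fun p : Fin m × Fin n × Bool =>
        if p.2.2 then w p.1 p.2.1 else z p.1 p.2.1) μ) :
    ENNReal.ofReal (1 - ((N : ℝ) * ((N : ℝ) - 1) / 2) * ρ ^ (k * m))
      ≤ μ {ω | Set.InjOn
          (fun (x : Fin n → ℝ) (r : Fin m) => σ (∑ j, w r j ω * z r j ω * x j)) ↑X} := by
  classical
  obtain ⟨hρ0, hρ1⟩ := hρ
  -- a linear ordering of pairs via the well-ordering relation
  set rel : (Fin n → ℝ) → (Fin n → ℝ) → Prop := WellOrderingRel with hrel
  have hto : IsTrichotomous (Fin n → ℝ) rel := inferInstance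
  have htrans : IsTrans (Fin n → ℝ) rel := inferInstance
  have hirr : IsIrrefl (Fin n → ℝ) rel := inferInstance
  set P : Finset ((Fin n → ℝ) × (Fin n → ℝ)) := X.offDiag.filter (fun p => rel p.1 p.2) with hP
  set PP : Finset ((Fin n → ℝ) × (Fin n → ℝ)) := X.offDiag.filter (fun p => rel p.2 p.1) with hPP
  have hasymm : ∀ a b : Fin n → ℝ, rel a b → rel b a → False := fun a b h1 h2 =>
    hirr.irrefl a (htrans.trans _ _ _ h1 h2)
  have hunion : X.offDiag = P ∪ PP := by
    ext p
    simp only [hP, hPP, Finset.mem_union, Finset.mem_filter]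
    constructor
    · intro hp
      have hne : p.1 ≠ p.2 := (Finset.mem_offDiag.1 hp).2.2
      rcases trichotomous_of rel p.1 p.2 with h | h | h
      · exact Or.inl ⟨hp, h⟩
      · exact absurd h hne
      · exact Or.inr ⟨hp, h⟩
    · rintro (⟨hp, _⟩ | ⟨hp, _⟩) <;> exact hp
  have hdisj : Disjoint P PP := by
    rw [Finset.disjoint_left]
    rintro p hp hq
    exact hasymm p.1 p.2 (Finset.mem_filter.1 hp).2 (Finset.mem_filter.1 hq).2
  have hcardPP : PP.card = P.card := by
    apply Finset.card_bij (fun p _ => p.swap)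
    · rintro p hp
      rw [Finset.mem_filter] at hp ⊢
      obtain ⟨hp1, hp2⟩ := hp
      rw [Finset.mem_offDiag] at hp1 ⊢
      exact ⟨⟨hp1.2.1, hp1.1, (hp1.2.2).symm⟩, hp2⟩
    · intro a _ b _ hab
      exact Prod.swap_injective hab
    · intro q hq
      refine ⟨q.swap, ?_, by simp⟩
      rw [Finset.mem_filter] at hq ⊢
      obtain ⟨hq1, hq2⟩ := hq
      rw [Finset.mem_offDiag] at hq1 ⊢
      exact ⟨⟨hq1.2.1, hq1.1, (hq1.2.2).symm⟩, hq2⟩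
  have hcard2 : 2 * P.card = N * N - N := by
    have h1 : X.offDiag.card = P.card + PP.card := by
      rw [hunion, Finset.card_union_of_disjoint hdisj]
    rw [Finset.offDiag_card, hX] at h1
    omega
  have hNle : N ≤ N * N := by
    rcases Nat.eq_zero_or_pos N with h | h
    · simp [h]
    · exact Nat.le_mul_of_pos_left N h
  have hcardR : (P.card : ℝ) = (N : ℝ) * ((N : ℝ) - 1) / 2 := by
    have := hcard2
    have h2 : (2 : ℝ) * P.card = (N : ℝ) * N - N := by
      have : ((2 * P.card : ℕ) : ℝ) = ((N * N - N : ℕ) : ℝ) := by rw [this]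
      rwa [Nat.cast_mul, Nat.cast_sub hNle, Nat.cast_mul, Nat.cast_ofNat] at this
    linarith
  -- events
  set E : (Fin n → ℝ) × (Fin n → ℝ) → Set Ω :=
    fun p => {ω | ∀ r, ∑ j, w r j ω * z r j ω * (p.1 j - p.2 j) = 0} with hE
  set Inj : Set Ω := {ω | Set.InjOn
      (fun (x : Fin n → ℝ) (r : Fin m) => σ (∑ j, w r j ω * z r j ω * x j)) ↑X} with hInj
  set Bad : Set Ω := {ω | ¬ Set.InjOn
      (fun (x : Fin n → ℝ) (r : Fin m) => σ (∑ j, w r j ω * z r j ω * x j)) ↑X} with hBad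
  have hBadsub : Bad ⊆ ⋃ p ∈ P, E p := by
    intro ω hω
    simp only [hBad, Set.mem_setOf_eq, Set.InjOn, not_forall] at hω
    obtain ⟨a, ha, b, hb, hfeq, hne⟩ := hω
    have hzero : ∀ r, ∑ j, w r j ω * z r j ω * (a j - b j) = 0 := by
      intro r
      have h := hσ (congrFun hfeq r)
      have h2 : ∑ j, (w r j ω * z r j ω * a j - w r j ω * z r j ω * b j) = 0 := by
        rw [Finset.sum_sub_distrib, h, sub_self]
      simpa [mul_sub] using h2
    have haX : a ∈ X := ha
    have hbX : b ∈ X := hb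
    rcases trichotomous_of rel a b with hr | hr | hr
    · refine Set.mem_biUnion (show (a, b) ∈ P from ?_) ?_
      · exact Finset.mem_filter.2 ⟨Finset.mem_offDiag.2 ⟨haX, hbX, hne⟩, hr⟩
      · exact hzero
    · exact absurd hr hne
    · refine Set.mem_biUnion (show (b, a) ∈ P from ?_) ?_
      · exact Finset.mem_filter.2 ⟨Finset.mem_offDiag.2 ⟨hbX, haX, Ne.symm hne⟩, hr⟩
      · intro r
        have hneg : ∑ j, w r j ω * z r j ω * (b j - a j)
            = -(∑ j, w r j ω * z r j ω * (a j - b j)) := by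
          rw [← Finset.sum_neg_distrib]
          exact Finset.sum_congr rfl fun j _ => by ring
        rw [hneg, hzero r, neg_zero]
  have hEbound : ∀ p ∈ P, μ (E p) ≤ ENNReal.ofReal ρ ^ (k * m) := by
    intro p hp
    have hpo := Finset.mem_offDiag.1 (Finset.mem_filter.1 hp).1
    exact pair_bound μ hρ0.le hρ1.le w z hwm hzm hatomless hz01 hbern hind (fun j : Fin n => p.1 j - p.2 j)
      (hkmin p.1 hpo.1 p.2 hpo.2.1 hpo.2.2)
  have hBadBound : μ Bad ≤ (P.card : ENNReal) * ENNReal.ofReal ρ ^ (k * m) := by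
    calc μ Bad ≤ μ (⋃ p ∈ P, E p) := measure_mono hBadsub
      _ ≤ ∑ p ∈ P, μ (E p) := measure_biUnion_finset_le P E
      _ ≤ ∑ _p ∈ P, ENNReal.ofReal ρ ^ (k * m) := Finset.sum_le_sum hEbound
      _ = (P.card : ENNReal) * ENNReal.ofReal ρ ^ (k * m) := by
          rw [Finset.sum_const, nsmul_eq_mul]
  have hBadBound2 : μ Bad ≤ ENNReal.ofReal (((N : ℝ) * ((N : ℝ) - 1) / 2) * ρ ^ (k * m)) := by
    refine hBadBound.trans_eq ?_
    rw [← hcardR, ENNReal.ofReal_mul (Nat.cast_nonneg _), ← ENNReal.ofReal_pow hρ0.le,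
      ENNReal.ofReal_natCast]
  have huniv : (1 : ENNReal) ≤ μ Inj + μ Bad := by
    have hsub : (Set.univ : Set Ω) ⊆ Inj ∪ Bad := by
      intro ω _
      by_cases h : ω ∈ Inj
      · exact Or.inl h
      · exact Or.inr h
    calc (1 : ENNReal) = μ Set.univ := measure_univ.symm
      _ ≤ μ (Inj ∪ Bad) := measure_mono hsub
      _ ≤ μ Inj + μ Bad := measure_union_le _ _
  set b : ℝ := ((N : ℝ) * ((N : ℝ) - 1) / 2) * ρ ^ (k * m) with hb
  have hb0 : 0 ≤ b := by
    rw [hb, ← hcardR]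
    exact mul_nonneg (Nat.cast_nonneg _) (pow_nonneg hρ0.le _)
  calc ENNReal.ofReal (1 - b) = ENNReal.ofReal 1 - ENNReal.ofReal b :=
        ENNReal.ofReal_sub 1 hb0
    _ = 1 - ENNReal.ofReal b := by rw [ENNReal.ofReal_one]
    _ ≤ μ Inj := by
        rw [tsub_le_iff_right]
        calc (1 : ENNReal) ≤ μ Inj + μ Bad := huniv
          _ ≤ μ Inj + ENNReal.ofReal b := add_le_add_right hBadBound2 _
end
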